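/- For every a ≥ 0, the non-negativity constraint can be omitted from the infimum defining I^D_a without changing its value: I^D_a = inf{ (1/(2d)) ∫_{ℝ^d} |∇φ(z)|² dz : φ : ℝ^d → ℝ smooth with compact support (not necessarily non-negative) and ⨍_D θ((√u + φ(z))²) dz > a }. (Claim stated below (0.8) and proved at the end of Section 4 in the proof of Theorem 4.2.) -/

import Mathlib

open MeasureTheory
open scoped ENNReal

/-- The Dirichlet energy `(1/(2d)) ∫_{ℝ^d} |∇φ|² dz` of `φ : ℝ^d → ℝ`. -/
noncomputable def dirichletEnergy (d : ℕ) (φ : EuclideanSpace ℝ (Fin d) → ℝ) : ℝ :=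
  (1 / (2 * (d : ℝ))) * ∫ z, ‖gradient φ z‖ ^ 2

/-- Admissible test functions for `I^D_a`: smooth, compactly supported, non-negative `φ`
with `⨍_D θ((√u + φ)²) dz > a` (`⨍` denotes the normalized integral over `D`). -/
def Admissible (d : ℕ) (u : ℝ) (θ : ℝ → ℝ) (D : Set (EuclideanSpace ℝ (Fin d))) (a : ℝ)
    (φ : EuclideanSpace ℝ (Fin d) → ℝ) : Prop :=
  ContDiff ℝ (⊤ : ℕ∞) φ ∧ HasCompactSupport φ ∧ (∀ z, 0 ≤ φ z) ∧
    a < ⨍ z in D, θ ((Real.sqrt u + φ z) ^ 2)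

/-- The constrained infimum `I^D_a ∈ [0,∞]` (with `inf ∅ = ∞`). -/
noncomputable def rateI (d : ℕ) (u : ℝ) (θ : ℝ → ℝ) (D : Set (EuclideanSpace ℝ (Fin d)))
    (a : ℝ) : ℝ≥0∞ :=
  sInf {t : ℝ≥0∞ | ∃ φ, Admissible d u θ D a φ ∧ t = ENNReal.ofReal (dirichletEnergy d φ)}

/-- Admissible test functions without the sign constraint. -/
def Admissible' (d : ℕ) (u : ℝ) (θ : ℝ → ℝ) (D : Set (EuclideanSpace ℝ (Fin d))) (a : ℝ)
    (φ : EuclideanSpace ℝ (Fin d) → ℝ) : Prop :=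
  ContDiff ℝ (⊤ : ℕ∞) φ ∧ HasCompactSupport φ ∧
    a < ⨍ z in D, θ ((Real.sqrt u + φ z) ^ 2)

/-- The constrained infimum without the requirement `φ ≥ 0`. -/
noncomputable def rateI' (d : ℕ) (u : ℝ) (θ : ℝ → ℝ) (D : Set (EuclideanSpace ℝ (Fin d)))
    (a : ℝ) : ℝ≥0∞ :=
  sInf {t : ℝ≥0∞ | ∃ φ, Admissible' d u θ D a φ ∧ t = ENNReal.ofReal (dirichletEnergy d φ)}

open Filter in
open scoped Topology in
private lemma exists_nonneg_admissible {d : ℕ} {u : ℝ} (hu : 0 < u) {θ : ℝ → ℝ}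
    (hθc : Continuous θ) (hθmono : MonotoneOn θ (Set.Ici 0))
    (hθnonneg : ∀ v, 0 ≤ v → 0 ≤ θ v) (hθbdd : BddAbove (θ '' Set.Ici 0))
    {D : Set (EuclideanSpace ℝ (Fin d))} (hDc : IsCompact D)
    {a : ℝ} {φ : EuclideanSpace ℝ (Fin d) → ℝ} (h : Admissible' d u θ D a φ) :
    ∃ ψ, Admissible d u θ D a ψ ∧ dirichletEnergy d ψ ≤ dirichletEnergy d φ := by
  obtain ⟨hφs, hφc, hφa⟩ := h
  set ε : ℕ → ℝ := fun n => 1 / ((n : ℝ) + 1) with hεdef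
  have hε : ∀ n, 0 < ε n := fun n => by positivity
  set ψ : ℕ → EuclideanSpace ℝ (Fin d) → ℝ :=
    fun n z => Real.sqrt (φ z * φ z + ε n * ε n) - ε n with hψdef
  have hpos : ∀ n z, 0 < φ z * φ z + ε n * ε n :=
    fun n z => add_pos_of_nonneg_of_pos (mul_self_nonneg _) (mul_pos (hε n) (hε n))
  -- smoothness
  have hψs : ∀ n, ContDiff ℝ (⊤ : ℕ∞) (ψ n) := by
    intro n
    exact (((hφs.mul hφs).add contDiff_const).sqrt
      (fun z => (hpos n z).ne')).sub contDiff_const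
  -- compact support
  have hψc : ∀ n, HasCompactSupport (ψ n) := by
    intro n
    refine hφc.mono ?_
    intro z hz
    simp only [Function.mem_support, ne_eq] at hz ⊢
    intro hcon
    exact hz (by simp [hψdef, hcon, Real.sqrt_mul_self (hε n).le])
  -- nonnegativity
  have hψ0 : ∀ n z, 0 ≤ ψ n z := by
    intro n z
    have h2 : Real.sqrt (ε n * ε n) ≤ Real.sqrt (φ z * φ z + ε n * ε n) :=
      Real.sqrt_le_sqrt (by nlinarith [mul_self_nonneg (φ z)])
    rw [Real.sqrt_mul_self (hε n).le] at h2
    simpa [hψdef] using sub_nonneg.2 h2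
  -- |φ z| ≤ sqrt(φ z * φ z + ε n * ε n)
  have habs : ∀ n z, |φ z| ≤ Real.sqrt (φ z * φ z + ε n * ε n) := by
    intro n z
    rw [← Real.sqrt_mul_self_eq_abs]
    exact Real.sqrt_le_sqrt (by nlinarith [mul_self_nonneg (ε n)])
  -- gradient (fderiv) bound
  have hgrad : ∀ n z, ‖fderiv ℝ (ψ n) z‖ ≤ ‖fderiv ℝ φ z‖ := by
    intro n z
    set v := fderiv ℝ φ z with hv
    set s := Real.sqrt (φ z * φ z + ε n * ε n) with hs
    have hspos : 0 < s := Real.sqrt_pos.2 (hpos n z)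
    have hd1 : HasFDerivAt φ v z := (hφs.differentiable (by simp) z).hasFDerivAt
    have hsq : HasFDerivAt (fun z => φ z * φ z + ε n * ε n)
        (φ z • v + φ z • v) z := (hd1.mul hd1).add_const _
    have hsqrt : HasDerivAt Real.sqrt (1 / (2 * s)) (φ z * φ z + ε n * ε n) :=
      Real.hasDerivAt_sqrt (hpos n z).ne'
    have hcomp : HasFDerivAt (fun z => Real.sqrt (φ z * φ z + ε n * ε n))
        ((1 / (2 * s)) • (φ z • v + φ z • v)) z := hsqrt.comp_hasFDerivAt z hsq
    have hψd : HasFDerivAt (ψ n) ((1 / (2 * s)) • (φ z • v + φ z • v)) z :=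
      hcomp.sub_const _
    rw [hψd.fderiv]
    have h1 : ‖(1 / (2 * s)) • (φ z • v + φ z • v)‖
        ≤ (1 / (2 * s)) * (|φ z| * ‖v‖ + |φ z| * ‖v‖) := by
      rw [norm_smul, Real.norm_eq_abs, abs_of_pos (by positivity)]
      gcongr
      calc ‖φ z • v + φ z • v‖ ≤ ‖φ z • v‖ + ‖φ z • v‖ := norm_add_le _ _
        _ = |φ z| * ‖v‖ + |φ z| * ‖v‖ := by rw [norm_smul, Real.norm_eq_abs]
    refine h1.trans ?_
    rw [div_mul_eq_mul_div, one_mul, div_le_iff₀ (by positivity)]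
    nlinarith [mul_le_mul_of_nonneg_right (habs n z) (norm_nonneg v), hspos.le,
      abs_nonneg (φ z), norm_nonneg v]
  -- norm of gradient equals norm of fderiv
  have hng : ∀ (f : EuclideanSpace ℝ (Fin d) → ℝ) z, ‖gradient f z‖ = ‖fderiv ℝ f z‖ := by
    intro f z
    exact (InnerProductSpace.toDual ℝ (EuclideanSpace ℝ (Fin d))).symm.norm_map (fderiv ℝ f z)
  -- energy comparison
  have hE : ∀ n, dirichletEnergy d (ψ n) ≤ dirichletEnergy d φ := by
    intro n
    unfold dirichletEnergy
    refine mul_le_mul_of_nonneg_left ?_ (by positivity)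
    have hint : Integrable (fun z => ‖gradient φ z‖ ^ 2) := by
      have heq : (fun z => ‖gradient φ z‖ ^ 2) = fun z => ‖fderiv ℝ φ z‖ ^ 2 :=
        funext fun z => by rw [hng]
      rw [heq]
      refine Continuous.integrable_of_hasCompactSupport
        (((hφs.continuous_fderiv (by simp)).norm).pow 2) ?_
      exact (hφc.fderiv ℝ).comp_left (g := fun w => ‖w‖ ^ 2) (by simp)
    refine integral_mono_of_nonneg (Filter.Eventually.of_forall fun z => by positivity)
      hint (Filter.Eventually.of_forall fun z => ?_)
    show ‖gradient (ψ n) z‖ ^ 2 ≤ ‖gradient φ z‖ ^ 2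
    rw [hng, hng]
    exact pow_le_pow_left₀ (norm_nonneg _) (hgrad n z) 2
  -- constraint: find n with a < average over D of θ((√u + ψ n)²)
  have hDm : MeasurableSet D := hDc.isClosed.measurableSet
  have hDfin : volume D < ⊤ := hDc.measure_lt_top
  set g : EuclideanSpace ℝ (Fin d) → ℝ := fun z => θ ((Real.sqrt u + |φ z|) ^ 2) with hgdef
  set f : EuclideanSpace ℝ (Fin d) → ℝ := fun z => θ ((Real.sqrt u + φ z) ^ 2) with hfdef
  have hfc : Continuous f := hθc.comp ((continuous_const.add hφs.continuous).pow 2)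
  have hgc : Continuous g := hθc.comp ((continuous_const.add hφs.continuous.abs).pow 2)
  have hfg : ∀ z, f z ≤ g z := by
    intro z
    refine hθmono (Set.mem_Ici.2 (sq_nonneg _)) (Set.mem_Ici.2 (sq_nonneg _)) ?_
    have h1 : -(Real.sqrt u + |φ z|) ≤ Real.sqrt u + φ z := by
      have := Real.sqrt_nonneg u
      have := neg_abs_le (φ z)
      linarith
    have h2 : Real.sqrt u + φ z ≤ Real.sqrt u + |φ z| := by
      linarith [le_abs_self (φ z)]
    exact sq_le_sq' h1 h2
  -- the set-integral of the approximations tends to that of g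
  have htend : Filter.Tendsto (fun n => ∫ z in D, θ ((Real.sqrt u + ψ n z) ^ 2))
      atTop (𝓝 (∫ z in D, g z)) := by
    set M : ℝ := sSup (θ '' Set.Ici 0) with hM
    have hle : ∀ v : ℝ, 0 ≤ v → θ v ≤ M := fun v hv => le_csSup hθbdd ⟨v, hv, rfl⟩
    refine tendsto_integral_of_dominated_convergence (fun _ => M)
      (fun n => ((hθc.comp ((continuous_const.add (hψs n).continuous).pow 2)).aestronglyMeasurable))
      ?_ (fun n => Filter.Eventually.of_forall fun z => ?_)
      (Filter.Eventually.of_forall fun z => ?_)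
    · exact integrableOn_const hDfin.ne
    · rw [Real.norm_eq_abs, abs_of_nonneg (hθnonneg _ (sq_nonneg _))]
      exact hle _ (sq_nonneg _)
    · -- pointwise convergence
      have hT : Continuous (fun e : ℝ =>
          θ ((Real.sqrt u + (Real.sqrt (φ z * φ z + e * e) - e)) ^ 2)) := by
        refine hθc.comp ?_
        refine (continuous_const.add ?_).pow 2
        exact (Real.continuous_sqrt.comp
          (continuous_const.add (continuous_id.mul continuous_id))).sub continuous_id
      have hε0 : Filter.Tendsto ε atTop (𝓝 0) := tendsto_one_div_add_atTop_nhds_zero_nat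
      have := (hT.tendsto 0).comp hε0
      simpa [hψdef, hgdef, Real.sqrt_mul_self_eq_abs, Function.comp_def] using this
  -- conclude via the average
  have hcint : ∀ (h : EuclideanSpace ℝ (Fin d) → ℝ), Continuous h → IntegrableOn h D :=
    fun h hh => hh.continuousOn.integrableOn_compact hDc
  have hfgint : ∫ z in D, f z ≤ ∫ z in D, g z :=
    setIntegral_mono_on (hcint f hfc) (hcint g hgc) hDm (fun z _ => hfg z)
  set c : ℝ := (volume D).toReal⁻¹ with hc
  have hc0 : 0 ≤ c := by positivity
  have ha' : a < c * ∫ z in D, g z := by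
    rw [setAverage_eq] at hφa
    calc a < c • ∫ z in D, f z := hφa
      _ = c * ∫ z in D, f z := rfl
      _ ≤ c * ∫ z in D, g z := mul_le_mul_of_nonneg_left hfgint hc0
  have htend' : Filter.Tendsto (fun n => c * ∫ z in D, θ ((Real.sqrt u + ψ n z) ^ 2))
      atTop (𝓝 (c * ∫ z in D, g z)) := htend.const_mul c
  obtain ⟨n, hn⟩ := (htend'.eventually_const_lt ha').exists
  refine ⟨ψ n, ⟨hψs n, hψc n, hψ0 n, ?_⟩, hE n⟩
  rw [setAverage_eq]
  exact hn

/-- Claim stated below (0.8): the non-negativity constraint may be omitted from the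
infimum defining `I^D_a` without changing its value. -/
theorem rateI_eq_rateI_no_sign_constraint (d : ℕ) (hd : 3 ≤ d) (u : ℝ) (hu : 0 < u)
    (θ : ℝ → ℝ) (hθc : Continuous θ) (hθmono : MonotoneOn θ (Set.Ici 0))
    (hθ0 : θ 0 = 0) (hθnonneg : ∀ v, 0 ≤ v → 0 ≤ θ v)
    (hθbdd : BddAbove (θ '' Set.Ici 0))
    (D : Set (EuclideanSpace ℝ (Fin d))) (hDc : IsCompact D) (hDpos : 0 < volume D)
    (hDcl : ∃ U : Set (EuclideanSpace ℝ (Fin d)),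
      IsOpen U ∧ Bornology.IsBounded U ∧ 0 ∈ U ∧ D = closure U)
    (a : ℝ) (ha : 0 ≤ a) :
    rateI d u θ D a = rateI' d u θ D a := by
  refine le_antisymm (le_sInf ?_) (sInf_le_sInf ?_)
  · rintro t ⟨φ, hφ, rfl⟩
    obtain ⟨ψ, hψ, hE⟩ := exists_nonneg_admissible hu hθc hθmono hθnonneg hθbdd hDc hφ
    exact sInf_le_of_le ⟨ψ, hψ, rfl⟩ (ENNReal.ofReal_le_ofReal hE)
  · rintro t ⟨φ, ⟨h1, h2, h3, h4⟩, ht⟩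
    exact ⟨φ, ⟨h1, h2, h4⟩, ht⟩
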